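/- Let G be a forest with distant edge {n-1,n}, where N_G(n-1) = {i_1,...,i_t, n-2, n} with each i_j a leaf. Let G_1, G_2, G_3 be the induced subgraphs on [n-1], [n-2], [n-3] respectively. Then I(G_1)^{[k]} ∩ x_n x_{n-1} I(G_2)^{[k-1]} = x_n x_{n-1}·( I(G_3)^{[k]} + x_{n-2} I(G_3)^{[k-1]} + Σ_{j=1}^t x_{i_j} I(G_2)^{[k-1]} ). -/

import Mathlib

/-!
All ideals involved are generated by squarefree monomials `x_S`, and `x_S` divides a monomial
exactly when `S` lies in its support; hence the intersection of two such ideals is generated by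
the `x_{A ∪ B}`, and the identity becomes a statement about vertex sets of matchings.
A `k`-matching `M` of `G₁` either matches `vw` to `vu` or to a leaf `i ∈ T`, or covers `vu` but
not `vw`, or covers neither; removing that edge yields a generator `x_{vu} x_{V(M')}` or
`x_i x_{V(M')}` below `x_{vn} x_{V(M)}`, resp. `M` is itself a matching of `G₃`. Conversely, a
generator `x_{vu} x_{V(M')}` or `x_i x_{V(M')}` comes from the `k`-matching `M' ∪ {vw vu}`,
resp. `M' ∪ {vw i}` of `G₁`: the leaf `i` is isolated in `G₂`, so `M'` does not cover it.
-/

open scoped Classical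
open MvPolynomial RingTheory

noncomputable section

/-- `M` is a matching of `G`. -/
def IsMatchingSet {V : Type*} (G : SimpleGraph V) (M : Finset (Sym2 V)) : Prop :=
  (∀ e ∈ M, e ∈ G.edgeSet) ∧
    ∀ e ∈ M, ∀ f ∈ M, e ≠ f → ∀ v : V, v ∈ e → v ∉ f

/-- The matching number `ν(G)`. -/
def matchingNumber {V : Type*} [Fintype V] (G : SimpleGraph V) : ℕ :=
  sSup {k | ∃ M : Finset (Sym2 V), IsMatchingSet G M ∧ M.card = k}

/-- The `k`-th squarefree power `I(G)^{[k]}` of the edge ideal of a graph `G` on `Fin n`: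
the ideal generated by the monomials `x_{V(M)}` for all `k`-matchings `M` of `G`.
For `k = 0` this is the unit ideal. -/
def edgeIdealSqPow (K : Type*) [Field K] {n : ℕ} (G : SimpleGraph (Fin n)) (k : ℕ) :
    Ideal (MvPolynomial (Fin n) K) :=
  Ideal.span {f | ∃ M : Finset (Sym2 (Fin n)), IsMatchingSet G M ∧ M.card = k ∧
    f = ∏ v ∈ Finset.univ.filter (fun v => ∃ e ∈ M, v ∈ e), X v}

/-- The graded maximal ideal `(x_1, …, x_n)` of the polynomial ring. -/
def maxIdeal (K : Type*) [Field K] (n : ℕ) : Ideal (MvPolynomial (Fin n) K) :=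
  Ideal.span (Set.range X)

/-- The depth of `S/I` : the maximum length of an `S/I`-regular sequence contained in
the graded maximal ideal. -/
def depthQuot {K : Type*} [Field K] {n : ℕ} (I : Ideal (MvPolynomial (Fin n) K)) : ℕ :=
  sSup {d | ∃ rs : List (MvPolynomial (Fin n) K), rs.length = d ∧
    (∀ r ∈ rs, r ∈ maxIdeal K n) ∧
    RingTheory.Sequence.IsRegular (MvPolynomial (Fin n) K ⧸ I) rs}

/-- The normalized depth function of the edge ideal of `G`:
`g_{I(G)}(k) = depth(S/I(G)^{[k]}) - (2k-1)`. -/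
def gEdge (K : Type*) [Field K] {n : ℕ} (G : SimpleGraph (Fin n)) (k : ℕ) : ℤ :=
  (depthQuot (edgeIdealSqPow K G k) : ℤ) - (2 * k - 1)


/-- The graph obtained from `G` by deleting the vertices in `s` (keeping the same
vertex type; deleted vertices become isolated). -/
def delV {V : Type*} (G : SimpleGraph V) (s : Set V) : SimpleGraph V where
  Adj u v := G.Adj u v ∧ u ∉ s ∧ v ∉ s
  symm := ⟨fun u v h => ⟨h.1.symm, h.2.2, h.2.1⟩⟩
  loopless := ⟨fun v h => G.irrefl h.1⟩


namespace MvPolynomial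

variable {σ : Type*} (R : Type*) [CommSemiring R]

def squarefreeMonomialIdeal (𝒜 : Set (Finset σ)) : Ideal (MvPolynomial σ R) :=
  Ideal.span ((fun S => ∏ v ∈ S, X v) '' 𝒜)

variable {R}

theorem prod_X_eq_monomial (S : Finset σ) :
    (∏ v ∈ S, X v : MvPolynomial σ R) = monomial (∑ v ∈ S, Finsupp.single v 1) 1 :=
  (monomial_sum_one S _).symm

theorem sum_single_one_le_iff (S : Finset σ) (m : σ →₀ ℕ) :
    ∑ v ∈ S, Finsupp.single v 1 ≤ m ↔ S ⊆ m.support := by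
  classical
  simp only [Finsupp.le_def, Finsupp.finsetSum_apply, Finsupp.single_apply,
    Finset.sum_ite_eq', Finset.subset_iff, Finsupp.mem_support_iff]
  refine ⟨fun h v hv => ?_, fun h v => ?_⟩
  · simpa [hv, Nat.one_le_iff_ne_zero] using h v
  · split_ifs with hv
    · exact Nat.one_le_iff_ne_zero.mpr (h hv)
    · exact Nat.zero_le _

theorem mem_squarefreeMonomialIdeal_iff {𝒜 : Set (Finset σ)} {p : MvPolynomial σ R} :
    p ∈ squarefreeMonomialIdeal R 𝒜 ↔ ∀ m ∈ p.support, ∃ S ∈ 𝒜, S ⊆ m.support := by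
  have h𝒜 : (fun S : Finset σ => ∏ v ∈ S, (X v : MvPolynomial σ R)) '' 𝒜 =
      (fun s => monomial s 1) '' ((fun S => ∑ v ∈ S, Finsupp.single v 1) '' 𝒜) := by
    rw [Set.image_image]
    simp only [prod_X_eq_monomial]
  simp only [squarefreeMonomialIdeal, h𝒜, mem_ideal_span_monomial_image, Set.exists_mem_image,
    sum_single_one_le_iff]

/-- The intersection is generated by the unions `A ∪ B`, i.e. by the least common multiples. -/
theorem squarefreeMonomialIdeal_inf_squarefreeMonomialIdeal [DecidableEq σ]
    {𝒜 ℬ 𝒞 : Set (Finset σ)}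
    (h𝒞 : ∀ C ∈ 𝒞, (∃ A ∈ 𝒜, A ⊆ C) ∧ ∃ B ∈ ℬ, B ⊆ C)
    (h𝒜ℬ : ∀ A ∈ 𝒜, ∀ B ∈ ℬ, ∃ C ∈ 𝒞, C ⊆ A ∪ B) :
    squarefreeMonomialIdeal R 𝒜 ⊓ squarefreeMonomialIdeal R ℬ = squarefreeMonomialIdeal R 𝒞 := by
  ext p
  simp only [Submodule.mem_inf, mem_squarefreeMonomialIdeal_iff]
  constructor
  · rintro ⟨hA, hB⟩ m hm
    obtain ⟨A, hA, hAm⟩ := hA m hm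
    obtain ⟨B, hB, hBm⟩ := hB m hm
    obtain ⟨C, hC, hCAB⟩ := h𝒜ℬ A hA B hB
    exact ⟨C, hC, hCAB.trans (Finset.union_subset hAm hBm)⟩
  · intro h
    refine ⟨fun m hm => ?_, fun m hm => ?_⟩ <;> obtain ⟨C, hC, hCm⟩ := h m hm
    · obtain ⟨A, hA, hAC⟩ := (h𝒞 C hC).1
      exact ⟨A, hA, hAC.trans hCm⟩
    · obtain ⟨B, hB, hBC⟩ := (h𝒞 C hC).2
      exact ⟨B, hB, hBC.trans hCm⟩

theorem squarefreeMonomialIdeal_mul_squarefreeMonomialIdeal [DecidableEq σ]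
    {𝒜 ℬ : Set (Finset σ)} (h : ∀ A ∈ 𝒜, ∀ B ∈ ℬ, Disjoint A B) :
    squarefreeMonomialIdeal R 𝒜 * squarefreeMonomialIdeal R ℬ =
      squarefreeMonomialIdeal R (Set.image2 (· ∪ ·) 𝒜 ℬ) := by
  rw [squarefreeMonomialIdeal, squarefreeMonomialIdeal, squarefreeMonomialIdeal,
    Ideal.span_mul_span', ← Set.image2_mul, Set.image2_image_left, Set.image2_image_right,
    Set.image_image2]
  congr 1
  exact Set.image2_congr fun A hA B hB => (Finset.prod_union (h A hA B hB)).symm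

theorem squarefreeMonomialIdeal_sup_squarefreeMonomialIdeal (𝒜 ℬ : Set (Finset σ)) :
    squarefreeMonomialIdeal R 𝒜 ⊔ squarefreeMonomialIdeal R ℬ =
      squarefreeMonomialIdeal R (𝒜 ∪ ℬ) := by
  rw [squarefreeMonomialIdeal, squarefreeMonomialIdeal, squarefreeMonomialIdeal,
    Set.image_union, Ideal.span_union]

end MvPolynomial

section Matching

variable {V : Type*} {G : SimpleGraph V} {M M' : Finset (Sym2 V)}

theorem IsMatchingSet.subset (h : IsMatchingSet G M) (hM : M' ⊆ M) : IsMatchingSet G M' :=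
  ⟨fun e he => h.1 e (hM he), fun e he f hf => h.2 e (hM he) f (hM hf)⟩

theorem mem_edgeSet_delV_iff {s : Set V} {e : Sym2 V} :
    e ∈ (delV G s).edgeSet ↔ e ∈ G.edgeSet ∧ ∀ v ∈ e, v ∉ s := by
  induction e using Sym2.ind with
  | _ a b => simp [delV]

variable [Fintype V] [DecidableEq V]

def vertexSet (M : Finset (Sym2 V)) : Finset V :=
  Finset.univ.filter fun v => ∃ e ∈ M, v ∈ e

@[simp]
theorem mem_vertexSet {v : V} : v ∈ vertexSet M ↔ ∃ e ∈ M, v ∈ e := by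
  simp [vertexSet]

theorem vertexSet_mono (h : M' ⊆ M) : vertexSet M' ⊆ vertexSet M := by
  intro v
  simp only [mem_vertexSet]
  exact fun ⟨e, he, hv⟩ => ⟨e, h he, hv⟩

theorem vertexSet_insert (x y : V) (M : Finset (Sym2 V)) :
    vertexSet (insert s(x, y) M) = {x, y} ∪ vertexSet M := by
  ext v
  simp [or_assoc]

theorem IsMatchingSet.notMem_vertexSet_erase (h : IsMatchingSet G M) {e : Sym2 V} (he : e ∈ M)
    {v : V} (hv : v ∈ e) : v ∉ vertexSet (M.erase e) := by
  simp only [mem_vertexSet, Finset.mem_erase]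
  rintro ⟨f, ⟨hfe, hf⟩, hvf⟩
  exact h.2 e he f hf (Ne.symm hfe) v hv hvf

theorem IsMatchingSet.insert (h : IsMatchingSet G M) {x y : V} (hxy : G.Adj x y)
    (hx : x ∉ vertexSet M) (hy : y ∉ vertexSet M) : IsMatchingSet G (insert s(x, y) M) := by
  have hfresh : ∀ f ∈ M, ∀ v ∈ s(x, y), v ∉ f := by
    intro f hf v hv hvf
    rcases Sym2.mem_iff.mp hv with rfl | rfl
    exacts [hx (mem_vertexSet.mpr ⟨f, hf, hvf⟩), hy (mem_vertexSet.mpr ⟨f, hf, hvf⟩)]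
  refine ⟨fun e he => ?_, fun e he f hf hef v hve => ?_⟩
  · rcases Finset.mem_insert.mp he with rfl | he
    exacts [hxy, h.1 e he]
  · rcases Finset.mem_insert.mp he with rfl | he <;> rcases Finset.mem_insert.mp hf with rfl | hf
    · exact absurd rfl hef
    · exact hfresh f hf v hve
    · exact fun hvf => hfresh e he v hvf hve
    · exact h.2 e he f hf hef v hve

theorem isMatchingSet_delV_iff {s : Set V} :
    IsMatchingSet (delV G s) M ↔ IsMatchingSet G M ∧ ∀ v ∈ s, v ∉ vertexSet M := by
  simp only [IsMatchingSet, mem_edgeSet_delV_iff, mem_vertexSet]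
  constructor
  · rintro ⟨hM, hdisj⟩
    exact ⟨⟨fun e he => (hM e he).1, hdisj⟩, fun v hv ⟨e, he, hve⟩ => (hM e he).2 v hve hv⟩
  · rintro ⟨⟨hM, hdisj⟩, hs⟩
    exact ⟨fun e he => ⟨hM e he, fun v hve hv => hs v hv ⟨e, he, hve⟩⟩, hdisj⟩

def matchingVertexSets (G : SimpleGraph V) (k : ℕ) : Set (Finset V) :=
  vertexSet '' {M | IsMatchingSet G M ∧ M.card = k}

variable {k : ℕ} {S : Finset V}

theorem singleton_union_vertexSet_erase_subset {e : Sym2 V} (he : e ∈ M) {y : V} (hy : y ∈ e) :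
    {y} ∪ vertexSet (M.erase e) ⊆ vertexSet M :=
  Finset.union_subset (Finset.singleton_subset_iff.mpr (mem_vertexSet.mpr ⟨e, he, hy⟩))
    (vertexSet_mono (Finset.erase_subset e M))

theorem IsMatchingSet.erase_mem_matchingVertexSets_delV {s t : Set V}
    (h : IsMatchingSet (delV G s) M) {e : Sym2 V} (he : e ∈ M)
    (ht : ∀ v ∈ t, v ∈ s ∨ v ∈ e ∨ v ∉ vertexSet M) :
    vertexSet (M.erase e) ∈ matchingVertexSets (delV G t) (M.card - 1) := by
  rw [isMatchingSet_delV_iff] at h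
  have hsub := vertexSet_mono (Finset.erase_subset e M)
  refine ⟨M.erase e, ⟨isMatchingSet_delV_iff.mpr ⟨h.1.subset (Finset.erase_subset e M),
    fun v hv hvM => ?_⟩, Finset.card_erase_of_mem he⟩, rfl⟩
  rcases ht v hv with hs | hve | hvM'
  exacts [h.2 v hs (hsub hvM), h.1.notMem_vertexSet_erase he hve hvM, hvM' (hsub hvM)]

theorem matchingVertexSets_delV_anti {s t : Set V} (hst : s ⊆ t) :
    matchingVertexSets (delV G t) k ⊆ matchingVertexSets (delV G s) k := by
  rintro _ ⟨M, ⟨hM, hc⟩, rfl⟩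
  rw [isMatchingSet_delV_iff] at hM
  exact ⟨M, ⟨isMatchingSet_delV_iff.mpr ⟨hM.1, fun v hv => hM.2 v (hst hv)⟩, hc⟩, rfl⟩

theorem notMem_of_mem_matchingVertexSets_delV {s : Set V}
    (hS : S ∈ matchingVertexSets (delV G s) k) {v : V} (hv : v ∈ s) : v ∉ S := by
  obtain ⟨M, ⟨hM, -⟩, rfl⟩ := hS
  exact (isMatchingSet_delV_iff.mp hM).2 v hv

theorem notMem_of_mem_matchingVertexSets_delV_of_degree_eq_one [DecidableRel G.Adj] {s : Set V}
    (hS : S ∈ matchingVertexSets (delV G s) k) {i w : V} (hi : G.degree i = 1)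
    (hiw : G.Adj i w) (hw : w ∈ s) : i ∉ S := by
  obtain ⟨M, ⟨hM, -⟩, rfl⟩ := hS
  rw [mem_vertexSet]
  rintro ⟨e, he, hie⟩
  obtain ⟨z, rfl⟩ := Sym2.mem_iff_exists.mp hie
  obtain ⟨hiz, -, hz⟩ := hM.1 _ he
  obtain ⟨w', -, hw'⟩ := SimpleGraph.degree_eq_one_iff_existsUnique_adj.mp hi
  exact hz ((hw' z hiz).trans (hw' w hiw).symm ▸ hw)

theorem disjoint_of_mem_matchingVertexSets_delV {s : Set V} {A : Finset V} (hA : ↑A ⊆ s)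
    (hS : S ∈ matchingVertexSets (delV G s) k) : Disjoint A S :=
  Finset.disjoint_left.mpr fun _ hv => notMem_of_mem_matchingVertexSets_delV hS (hA hv)

theorem union_mem_matchingVertexSets {x y : V} (hxy : G.Adj x y)
    (hS : S ∈ matchingVertexSets G k) (hx : x ∉ S) (hy : y ∉ S) :
    {x, y} ∪ S ∈ matchingVertexSets G (k + 1) := by
  obtain ⟨M, ⟨hM, rfl⟩, rfl⟩ := hS
  have hnew : s(x, y) ∉ M := fun h => hx (mem_vertexSet.mpr ⟨_, h, Sym2.mem_mk_left x y⟩)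
  exact ⟨insert s(x, y) M, ⟨hM.insert hxy hx hy, Finset.card_insert_of_notMem hnew⟩,
    vertexSet_insert x y M⟩

theorem exists_subset_mem_matchingVertexSets_pred (hS : S ∈ matchingVertexSets G k)
    (hk : k ≠ 0) : ∃ S' ∈ matchingVertexSets G (k - 1), S' ⊆ S := by
  obtain ⟨M, ⟨hM, rfl⟩, rfl⟩ := hS
  obtain ⟨e, he⟩ := Finset.card_ne_zero.mp hk
  exact ⟨_, ⟨M.erase e, ⟨hM.subset (Finset.erase_subset e M), Finset.card_erase_of_mem he⟩,
    rfl⟩, vertexSet_mono (Finset.erase_subset e M)⟩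

end Matching

theorem edgeIdealSqPow_eq_squarefreeMonomialIdeal (K : Type*) [Field K] {n : ℕ}
    (G : SimpleGraph (Fin n)) (k : ℕ) :
    edgeIdealSqPow K G k = squarefreeMonomialIdeal K (matchingVertexSets G k) := by
  rw [edgeIdealSqPow, squarefreeMonomialIdeal, matchingVertexSets, Set.image_image]
  congr 1
  ext f
  constructor
  · rintro ⟨M, hM, hc, rfl⟩
    exact ⟨M, ⟨hM, hc⟩, rfl⟩
  · rintro ⟨M, ⟨hM, hc⟩, rfl⟩
    exact ⟨M, hM, hc, rfl⟩

section DistantEdge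

variable {V : Type*} [Fintype V] [DecidableEq V] {G : SimpleGraph V} {vn vw vu : V}
  {T : Finset V} {k : ℕ}

/-- The supports of the generators of
`I(G₃)^{[k]} + x_{vu} I(G₃)^{[k-1]} + Σ_{i ∈ T} x_i I(G₂)^{[k-1]}`,
where `Gⱼ` deletes the first `j` of `vn, vw, vu`. -/
def distantEdgeSets (G : SimpleGraph V) (vn vw vu : V) (T : Finset V) (k : ℕ) :
    Set (Finset V) :=
  matchingVertexSets (delV G {vn, vw, vu}) k ∪
    Set.image2 (· ∪ ·) {{vu}} (matchingVertexSets (delV G {vn, vw, vu}) (k - 1)) ∪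
    Set.image2 (· ∪ ·) ((fun i => {i}) '' ↑T) (matchingVertexSets (delV G {vn, vw}) (k - 1))

theorem exists_distantEdgeSets_subset [DecidableRel G.Adj]
    (hnbr : G.neighborFinset vw = insert vu (insert vn T)) {A : Finset V}
    (hA : A ∈ matchingVertexSets (delV G {vn}) k) :
    ∃ C ∈ distantEdgeSets G vn vw vu T k, C ⊆ A := by
  obtain ⟨M, ⟨hM, rfl⟩, rfl⟩ := hA
  have hvn : vn ∉ vertexSet M := (isMatchingSet_delV_iff.mp hM).2 vn rfl
  by_cases hw : vw ∈ vertexSet M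
  · -- `vw` is matched to a neighbour `y ≠ vn`, that is, to `vu` or to a leaf in `T`
    obtain ⟨e, he, hwe⟩ := mem_vertexSet.mp hw
    obtain ⟨y, rfl⟩ := Sym2.mem_iff_exists.mp hwe
    have hyM : y ∈ vertexSet M := mem_vertexSet.mpr ⟨_, he, Sym2.mem_mk_right vw y⟩
    have hy : y ∈ insert vu (insert vn T) :=
      hnbr ▸ (G.mem_neighborFinset vw y).mpr ((isMatchingSet_delV_iff.mp hM).1.1 _ he)
    have hsub := singleton_union_vertexSet_erase_subset he (Sym2.mem_mk_right vw y)
    rcases Finset.mem_insert.mp hy with rfl | hy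
    · refine ⟨_, Or.inl (Or.inr ⟨_, rfl, _, hM.erase_mem_matchingVertexSets_delV he ?_, rfl⟩),
        hsub⟩
      rintro v (rfl | rfl | rfl) <;> simp
    · rcases Finset.mem_insert.mp hy with rfl | hyT
      · exact absurd hyM hvn
      refine ⟨_, Or.inr ⟨_, ⟨y, hyT, rfl⟩, _, hM.erase_mem_matchingVertexSets_delV he ?_, rfl⟩,
        hsub⟩
      rintro v (rfl | rfl) <;> simp
  by_cases hu : vu ∈ vertexSet M
  · obtain ⟨e, he, hue⟩ := mem_vertexSet.mp hu
    refine ⟨_, Or.inl (Or.inr ⟨_, rfl, _, hM.erase_mem_matchingVertexSets_delV he ?_, rfl⟩),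
      singleton_union_vertexSet_erase_subset he hue⟩
    rintro v (rfl | rfl | rfl)
    exacts [Or.inl rfl, Or.inr (Or.inr hw), Or.inr (Or.inl hue)]
  · refine ⟨_, Or.inl (Or.inl ⟨M, ⟨isMatchingSet_delV_iff.mpr
      ⟨(isMatchingSet_delV_iff.mp hM).1, ?_⟩, rfl⟩, rfl⟩), subset_rfl⟩
    rintro v (rfl | rfl | rfl)
    exacts [hvn, hw, hu]

theorem exists_subsets_of_adj (hnw : vn ≠ vw) {y : V} (hy : G.Adj vw y) (hyn : y ≠ vn)
    {S : Finset V} (hS : S ∈ matchingVertexSets (delV G {vn, vw}) (k - 1)) (hyS : y ∉ S)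
    (hk : k ≠ 0) :
    (∃ A ∈ matchingVertexSets (delV G {vn}) k, A ⊆ {vn, vw} ∪ ({y} ∪ S)) ∧
      ∃ B ∈ matchingVertexSets (delV G {vn, vw}) (k - 1), B ⊆ {y} ∪ S := by
  refine ⟨⟨{vw, y} ∪ S, ?_, ?_⟩, S, hS, Finset.subset_union_right⟩
  · have h := union_mem_matchingVertexSets (G := delV G {vn}) ⟨hy, Ne.symm hnw, hyn⟩
      (matchingVertexSets_delV_anti (by simp) hS)
      (notMem_of_mem_matchingVertexSets_delV hS (by simp)) hyS
    rwa [Nat.sub_add_cancel (Nat.one_le_iff_ne_zero.mpr hk)] at h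
  · intro v
    simp only [Finset.mem_union, Finset.mem_insert, Finset.mem_singleton]
    tauto

section Neighbourhood

variable [DecidableRel G.Adj] (hnbr : G.neighborFinset vw = insert vu (insert vn T))
include hnbr

theorem adj_of_mem_neighborFinset {y : V} (hy : y ∈ insert vu (insert vn T)) : G.Adj vw y :=
  (G.mem_neighborFinset vw y).mp (hnbr ▸ hy)

theorem exists_subsets_of_mem_distantEdgeSets (hnu : vn ≠ vu) (hT : ∀ i ∈ T, G.degree i = 1)
    (hvnT : vn ∉ T) (hk : k ≠ 0) {C : Finset V} (hC : C ∈ distantEdgeSets G vn vw vu T k) :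
    (∃ A ∈ matchingVertexSets (delV G {vn}) k, A ⊆ {vn, vw} ∪ C) ∧
      ∃ B ∈ matchingVertexSets (delV G {vn, vw}) (k - 1), B ⊆ C := by
  have hnw : vn ≠ vw := (G.ne_of_adj (adj_of_mem_neighborFinset hnbr (by simp))).symm
  rcases hC with (hC | ⟨_, rfl, S, hS, rfl⟩) | ⟨_, ⟨i, hi, rfl⟩, S, hS, rfl⟩
  · refine ⟨⟨C, matchingVertexSets_delV_anti (by simp) hC, Finset.subset_union_right⟩, ?_⟩
    exact exists_subset_mem_matchingVertexSets_pred
      (matchingVertexSets_delV_anti (by simp [Set.insert_subset_iff]) hC) hk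
  · exact exists_subsets_of_adj hnw (adj_of_mem_neighborFinset hnbr (by simp)) (Ne.symm hnu)
      (matchingVertexSets_delV_anti (by simp [Set.insert_subset_iff]) hS)
      (notMem_of_mem_matchingVertexSets_delV hS (by simp)) hk
  · have hiw : G.Adj vw i := adj_of_mem_neighborFinset hnbr (by simp [Finset.mem_coe.mp hi])
    exact exists_subsets_of_adj hnw hiw (fun h => hvnT (h ▸ hi)) hS
      (notMem_of_mem_matchingVertexSets_delV_of_degree_eq_one hS (hT i hi) hiw.symm (by simp)) hk

theorem disjoint_of_mem_distantEdgeSets (hnu : vn ≠ vu) (hvnT : vn ∉ T) {C : Finset V}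
    (hC : C ∈ distantEdgeSets G vn vw vu T k) : Disjoint {vn, vw} C := by
  rcases hC with (hC | ⟨_, rfl, S, hS, rfl⟩) | ⟨_, ⟨i, hi, rfl⟩, S, hS, rfl⟩
  · exact disjoint_of_mem_matchingVertexSets_delV (by simp [Set.insert_subset_iff]) hC
  · have hwu : vu ≠ vw := (G.ne_of_adj (adj_of_mem_neighborFinset hnbr (by simp))).symm
    refine Finset.disjoint_union_right.mpr ⟨by simp [hnu.symm, hwu], ?_⟩
    exact disjoint_of_mem_matchingVertexSets_delV (by simp [Set.insert_subset_iff]) hS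
  · have hiw : i ≠ vw :=
      (G.ne_of_adj (adj_of_mem_neighborFinset hnbr (by simp [Finset.mem_coe.mp hi]))).symm
    have hin : i ≠ vn := fun h => hvnT (h ▸ hi)
    refine Finset.disjoint_union_right.mpr ⟨by simp [hin, hiw], ?_⟩
    exact disjoint_of_mem_matchingVertexSets_delV (by simp) hS

theorem squarefreeMonomialIdeal_inf_eq_of_distantEdge {R : Type*} [CommSemiring R]
    (hnu : vn ≠ vu) (hT : ∀ i ∈ T, G.degree i = 1) (hvnT : vn ∉ T) (hk : k ≠ 0) :
    squarefreeMonomialIdeal R (matchingVertexSets (delV G {vn}) k) ⊓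
        (squarefreeMonomialIdeal R {{vn, vw}} *
          squarefreeMonomialIdeal R (matchingVertexSets (delV G {vn, vw}) (k - 1))) =
      squarefreeMonomialIdeal R {{vn, vw}} *
        (squarefreeMonomialIdeal R (matchingVertexSets (delV G {vn, vw, vu}) k) ⊔
          squarefreeMonomialIdeal R {{vu}} *
            squarefreeMonomialIdeal R (matchingVertexSets (delV G {vn, vw, vu}) (k - 1)) ⊔
          squarefreeMonomialIdeal R ((fun i => {i}) '' ↑T) *
            squarefreeMonomialIdeal R (matchingVertexSets (delV G {vn, vw}) (k - 1))) := by
  have hd_u : ∀ A ∈ ({{vu}} : Set (Finset V)),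
      ∀ B ∈ matchingVertexSets (delV G {vn, vw, vu}) (k - 1), Disjoint A B := by
    rintro _ rfl B hB
    exact disjoint_of_mem_matchingVertexSets_delV (by simp) hB
  have hd_T : ∀ A ∈ (fun i => {i}) '' (T : Set V),
      ∀ B ∈ matchingVertexSets (delV G {vn, vw}) (k - 1), Disjoint A B := by
    rintro _ ⟨i, hi, rfl⟩ B hB
    exact Finset.disjoint_singleton_left.mpr <|
      notMem_of_mem_matchingVertexSets_delV_of_degree_eq_one hB (hT i hi)
        (adj_of_mem_neighborFinset hnbr (by simp [Finset.mem_coe.mp hi])).symm (by simp)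
  have hd_w : ∀ A ∈ ({{vn, vw}} : Set (Finset V)),
      ∀ B ∈ matchingVertexSets (delV G {vn, vw}) (k - 1), Disjoint A B := by
    rintro _ rfl B hB
    exact disjoint_of_mem_matchingVertexSets_delV (by simp) hB
  have hd_w' : ∀ A ∈ ({{vn, vw}} : Set (Finset V)),
      ∀ C ∈ distantEdgeSets G vn vw vu T k, Disjoint A C := by
    rintro _ rfl C hC
    exact disjoint_of_mem_distantEdgeSets hnbr hnu hvnT hC
  rw [squarefreeMonomialIdeal_mul_squarefreeMonomialIdeal hd_u,
    squarefreeMonomialIdeal_mul_squarefreeMonomialIdeal hd_T,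
    squarefreeMonomialIdeal_sup_squarefreeMonomialIdeal,
    squarefreeMonomialIdeal_sup_squarefreeMonomialIdeal, ← distantEdgeSets,
    squarefreeMonomialIdeal_mul_squarefreeMonomialIdeal hd_w',
    squarefreeMonomialIdeal_mul_squarefreeMonomialIdeal hd_w]
  refine squarefreeMonomialIdeal_inf_squarefreeMonomialIdeal ?_ ?_
  · rintro _ ⟨_, rfl, C, hC, rfl⟩
    obtain ⟨⟨A, hA, hAC⟩, B, hB, hBC⟩ :=
      exists_subsets_of_mem_distantEdgeSets hnbr hnu hT hvnT hk hC
    exact ⟨⟨A, hA, hAC⟩, _, ⟨_, rfl, B, hB, rfl⟩, Finset.union_subset_union_right hBC⟩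
  · rintro A hA _ ⟨_, rfl, B, -, rfl⟩
    obtain ⟨C, hC, hCA⟩ := exists_distantEdgeSets_subset hnbr hA
    refine ⟨_, ⟨_, rfl, C, hC, rfl⟩, Finset.union_subset ?_ (hCA.trans Finset.subset_union_left)⟩
    exact Finset.subset_union_left.trans Finset.subset_union_right

end Neighbourhood

end DistantEdge

theorem stmt_11_general (K : Type*) [Field K] {n : ℕ} (hn : 3 ≤ n)
    (G : SimpleGraph (Fin n)) [DecidableRel G.Adj]
    (vn vw vu : Fin n)
    (hvn : (vn : ℕ) = n - 1) (hvu : (vu : ℕ) = n - 3)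
    (T : Finset (Fin n)) (hT : ∀ i ∈ T, G.degree i = 1)
    (hvnT : vn ∉ T)
    (hnbr : G.neighborFinset vw = insert vu (insert vn T))
    (k : ℕ) (h1 : 1 ≤ k) :
    edgeIdealSqPow K (delV G {vn}) k ⊓
        (Ideal.span {(X vn * X vw : MvPolynomial (Fin n) K)} *
          edgeIdealSqPow K (delV G {vn, vw}) (k - 1)) =
      Ideal.span {(X vn * X vw : MvPolynomial (Fin n) K)} *
        (edgeIdealSqPow K (delV G {vn, vw, vu}) k ⊔
          Ideal.span {(X vu : MvPolynomial (Fin n) K)} *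
            edgeIdealSqPow K (delV G {vn, vw, vu}) (k - 1) ⊔
          Ideal.span ((fun i : Fin n => (X i : MvPolynomial (Fin n) K)) '' T) *
            edgeIdealSqPow K (delV G {vn, vw}) (k - 1)) := by
  have hnu : vn ≠ vu := Fin.ne_of_val_ne (by omega)
  have hnw : vn ≠ vw := (G.ne_of_adj (adj_of_mem_neighborFinset hnbr (by simp))).symm
  have hspan_w : Ideal.span {(X vn * X vw : MvPolynomial (Fin n) K)} =
      squarefreeMonomialIdeal K {{vn, vw}} := by
    rw [squarefreeMonomialIdeal, Set.image_singleton, Finset.prod_pair hnw]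
  have hspan_u : Ideal.span {(X vu : MvPolynomial (Fin n) K)} =
      squarefreeMonomialIdeal K {{vu}} := by
    rw [squarefreeMonomialIdeal, Set.image_singleton, Finset.prod_singleton]
  have hspan_T : Ideal.span ((fun i : Fin n => (X i : MvPolynomial (Fin n) K)) '' T) =
      squarefreeMonomialIdeal K ((fun i => {i}) '' T) := by
    simp only [squarefreeMonomialIdeal, Set.image_image, Finset.prod_singleton]
  simp only [edgeIdealSqPow_eq_squarefreeMonomialIdeal, hspan_w, hspan_u, hspan_T]
  exact squarefreeMonomialIdeal_inf_eq_of_distantEdge hnbr hnu hT hvnT (by omega)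

/-- Setup of the paper: `G` is a forest, `vn` (coordinate `n-1`) a distant leaf with
neighbor `vw` (coordinate `n-2`), `N_G(vw) = T ∪ {vu, vn}` where `vu` has coordinate
`n-3` and the vertices of `T` are leaves. Then, with `Gᵢ` the graphs obtained by
deleting the last `i` of these vertices,
`I(G₁)^{[k]} ∩ x_{vn}x_{vw} I(G₂)^{[k-1]}
  = x_{vn}x_{vw}·( I(G₃)^{[k]} + x_{vu} I(G₃)^{[k-1]} + Σ_{i ∈ T} x_i I(G₂)^{[k-1]} )`. -/
theorem stmt_11 (K : Type*) [Field K] {n : ℕ} (hn : 3 ≤ n)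
    (G : SimpleGraph (Fin n)) [DecidableRel G.Adj] (hforest : G.IsAcyclic)
    (hnu : 3 ≤ matchingNumber G)
    (vn vw vu : Fin n)
    (hvn : (vn : ℕ) = n - 1) (hvw : (vw : ℕ) = n - 2) (hvu : (vu : ℕ) = n - 3)
    (hadj : G.Adj vw vn) (hleaf : G.degree vn = 1)
    (T : Finset (Fin n)) (hT : ∀ i ∈ T, G.degree i = 1)
    (hvnT : vn ∉ T) (hvuT : vu ∉ T)
    (hnbr : G.neighborFinset vw = insert vu (insert vn T))
    (hdegu : 1 ≤ G.degree vu)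
    (k : ℕ) (h1 : 1 ≤ k) (h2 : k ≤ matchingNumber G) :
    edgeIdealSqPow K (delV G {vn}) k ⊓
        (Ideal.span {(X vn * X vw : MvPolynomial (Fin n) K)} *
          edgeIdealSqPow K (delV G {vn, vw}) (k - 1)) =
      Ideal.span {(X vn * X vw : MvPolynomial (Fin n) K)} *
        (edgeIdealSqPow K (delV G {vn, vw, vu}) k ⊔
          Ideal.span {(X vu : MvPolynomial (Fin n) K)} *
            edgeIdealSqPow K (delV G {vn, vw, vu}) (k - 1) ⊔
          Ideal.span ((fun i : Fin n => (X i : MvPolynomial (Fin n) K)) '' T) *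
            edgeIdealSqPow K (delV G {vn, vw}) (k - 1)) :=
  stmt_11_general K hn G vn vw vu hvn hvu T hT hvnT hnbr k h1

end
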